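/- arXiv:2407.00241 — 3 statements merged into one kernel-verified Lean document; each statement's English description precedes it below -/
import Mathlib

section
/- Let 𝒩 : ℍⁿ → ℍᵐ be a positive linear map, and let U ∈ ℂ^{m×r} be an isometry (U†U = I_r) whose columns form an orthonormal basis of the range (column space) of 𝒩(I). Then: (a) for every X ∈ ℍⁿ, 𝒩(X) = U·(U†𝒩(X)U)·U†; and (b) if X ∈ ℍⁿ₊₊ then U†𝒩(X)U ∈ ℍʳ₊₊, i.e. U†𝒩(X)U is positive definite. -/
open Matrix Kronecker Filter Topology
open scoped ComplexOrder

noncomputable section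

/-- Matrices agreeing on all `mulVec` are equal. -/
private lemma mulVec_ext' {a b : ℕ} {M N : Matrix (Fin a) (Fin b) ℂ}
    (h : ∀ x, M *ᵥ x = N *ᵥ x) : M = N := by
  ext i j
  have := congrFun (h (Pi.single j 1)) i
  simpa using this

private lemma spectral_shift_eq {k : ℕ} {X : Matrix (Fin k) (Fin k) ℂ}
    (hX : X.IsHermitian) (a b : ℝ) :
    a • (1 : Matrix (Fin k) (Fin k) ℂ) + b • X =
      (hX.eigenvectorUnitary : Matrix (Fin k) (Fin k) ℂ) *
        Matrix.diagonal (fun i => ((a + b * hX.eigenvalues i : ℝ) : ℂ)) *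
        (hX.eigenvectorUnitary : Matrix (Fin k) (Fin k) ℂ)ᴴ := by
  set V : Matrix (Fin k) (Fin k) ℂ := (hX.eigenvectorUnitary : Matrix (Fin k) (Fin k) ℂ) with hV
  have hVV : V * Vᴴ = 1 := by
    rw [← Matrix.star_eq_conjTranspose]
    exact Matrix.mem_unitaryGroup_iff.mp hX.eigenvectorUnitary.2
  have hD : Matrix.diagonal (fun i => ((a + b * hX.eigenvalues i : ℝ) : ℂ)) =
      (a : ℂ) • (1 : Matrix (Fin k) (Fin k) ℂ) +
        (b : ℂ) • Matrix.diagonal (RCLike.ofReal ∘ hX.eigenvalues) := by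
    ext i j
    rcases eq_or_ne i j with h | h
    · subst h
      simp only [Matrix.diagonal_apply_eq, Matrix.add_apply, Matrix.smul_apply,
        Matrix.one_apply_eq, Function.comp_apply, smul_eq_mul, mul_one]
      push_cast
      rfl
    · simp [Matrix.diagonal_apply_ne _ h, Matrix.one_apply_ne h]
  have hspec : X = V * Matrix.diagonal (RCLike.ofReal ∘ hX.eigenvalues) * Vᴴ := by
    rw [← Matrix.star_eq_conjTranspose]
    exact hX.spectral_theorem
  have e1 : V * ((a : ℂ) • (1 : Matrix (Fin k) (Fin k) ℂ)) * Vᴴ =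
      (a : ℂ) • (1 : Matrix (Fin k) (Fin k) ℂ) := by
    rw [Matrix.mul_smul, mul_one, Matrix.smul_mul, hVV]
  have e2 : V * ((b : ℂ) • Matrix.diagonal (RCLike.ofReal ∘ hX.eigenvalues)) * Vᴴ =
      (b : ℂ) • X := by
    rw [Matrix.mul_smul, Matrix.smul_mul]
    exact congrArg _ hspec.symm
  have hr : ∀ (t : ℝ) (M : Matrix (Fin k) (Fin k) ℂ), t • M = (t : ℂ) • M := by
    intro t M
    ext i j
    simp [Complex.real_smul]
  rw [hD, Matrix.mul_add, Matrix.add_mul, e1, e2, hr a, hr b]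

private lemma spectral_shift_psd {k : ℕ} {X : Matrix (Fin k) (Fin k) ℂ}
    (hX : X.IsHermitian) (a b : ℝ) (h : ∀ i, 0 ≤ a + b * hX.eigenvalues i) :
    (a • (1 : Matrix (Fin k) (Fin k) ℂ) + b • X).PosSemidef := by
  rw [spectral_shift_eq hX a b]
  exact (Matrix.posSemidef_diagonal_iff.mpr fun i => by
    simpa using Complex.zero_le_real.mpr (h i)).mul_mul_conjTranspose_same _

private lemma exists_shift_bound {k : ℕ} {X : Matrix (Fin k) (Fin k) ℂ}
    (hX : X.IsHermitian) :
    ∃ c : ℝ, (c • (1 : Matrix (Fin k) (Fin k) ℂ) + X).PosSemidef ∧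
      (c • (1 : Matrix (Fin k) (Fin k) ℂ) - X).PosSemidef := by
  refine ⟨∑ i, |hX.eigenvalues i|, ?_, ?_⟩
  · have := spectral_shift_psd hX (∑ i, |hX.eigenvalues i|) 1 (fun i => by
      have h1 : |hX.eigenvalues i| ≤ ∑ j, |hX.eigenvalues j| :=
        Finset.single_le_sum (f := fun j => |hX.eigenvalues j|)
          (fun j _ => abs_nonneg _) (Finset.mem_univ i)
      have := (abs_le.mp (le_refl |hX.eigenvalues i|)).1
      nlinarith [abs_le.mp (le_refl |hX.eigenvalues i|)])
    rwa [one_smul] at this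
  · have := spectral_shift_psd hX (∑ i, |hX.eigenvalues i|) (-1) (fun i => by
      have h1 : |hX.eigenvalues i| ≤ ∑ j, |hX.eigenvalues j| :=
        Finset.single_le_sum (f := fun j => |hX.eigenvalues j|)
          (fun j _ => abs_nonneg _) (Finset.mem_univ i)
      nlinarith [abs_le.mp (le_refl |hX.eigenvalues i|)])
    rwa [neg_one_smul, ← sub_eq_add_neg] at this

private lemma posDef_exists_eps {k : ℕ} {X : Matrix (Fin k) (Fin k) ℂ}
    (hX : X.PosDef) :
    ∃ ε : ℝ, 0 < ε ∧ (X - ε • (1 : Matrix (Fin k) (Fin k) ℂ)).PosSemidef := by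
  rcases isEmpty_or_nonempty (Fin k) with hk | hk
  · refine ⟨1, one_pos, ⟨?_, fun x => by simp [Subsingleton.elim x 0]⟩⟩
    ext i j
    exact isEmptyElim i
  · set ε : ℝ := Finset.univ.inf' Finset.univ_nonempty hX.1.eigenvalues with hε
    refine ⟨ε, ?_, ?_⟩
    · rw [hε, Finset.lt_inf'_iff]
      exact fun i _ => hX.eigenvalues_pos i
    · have h := spectral_shift_psd hX.1 (-ε) 1 (fun i => by
        have : ε ≤ hX.1.eigenvalues i := Finset.inf'_le _ (Finset.mem_univ i)
        linarith)
      have heq : (-ε) • (1 : Matrix (Fin k) (Fin k) ℂ) + (1:ℝ) • X =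
          X - ε • (1 : Matrix (Fin k) (Fin k) ℂ) := by
        rw [one_smul, neg_smul]
        abel
      rwa [heq] at h

private lemma ker_mono' {k : ℕ} {A B : Matrix (Fin k) (Fin k) ℂ}
    (hA : A.PosSemidef) (hBA : (B - A).PosSemidef) {x : Fin k → ℂ}
    (hx : B *ᵥ x = 0) : A *ᵥ x = 0 := by
  have h1 : (0:ℂ) ≤ star x ⬝ᵥ (B - A) *ᵥ x := hBA.dotProduct_mulVec_nonneg x
  rw [Matrix.sub_mulVec, dotProduct_sub, hx, dotProduct_zero, zero_sub] at h1
  have h2 : (0:ℂ) ≤ star x ⬝ᵥ A *ᵥ x := hA.dotProduct_mulVec_nonneg x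
  have h3 : star x ⬝ᵥ A *ᵥ x = 0 := le_antisymm (neg_nonneg.mp h1) h2
  exact (hA.dotProduct_mulVec_zero_iff x).mp h3

/-- If `U` is an isometry whose columns form an orthonormal basis of the
range of `𝒩(I)` for a positive linear map `𝒩`, then `𝒩(X) = U (U† 𝒩(X) U) U†` for every
Hermitian `X`, and `U† 𝒩(X) U` is positive definite whenever `X` is. -/
theorem positiveMap_facialReduction
    (n m r : ℕ)
    (𝒩 : Matrix (Fin n) (Fin n) ℂ →ₗ[ℝ] Matrix (Fin m) (Fin m) ℂ)
    (h𝒩 : ∀ X : Matrix (Fin n) (Fin n) ℂ, X.PosSemidef → (𝒩 X).PosSemidef)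
    (U : Matrix (Fin m) (Fin r) ℂ)
    (hU : Uᴴ * U = 1)
    (hrange : LinearMap.range (𝒩 (1 : Matrix (Fin n) (Fin n) ℂ)).mulVecLin =
      LinearMap.range U.mulVecLin) :
    (∀ X : Matrix (Fin n) (Fin n) ℂ, X.IsHermitian →
      𝒩 X = U * (Uᴴ * 𝒩 X * U) * Uᴴ) ∧
    (∀ X : Matrix (Fin n) (Fin n) ℂ, X.PosDef → (Uᴴ * 𝒩 X * U).PosDef) := by
  set N1 : Matrix (Fin m) (Fin m) ℂ := 𝒩 1 with hN1def
  have hN1 : N1.PosSemidef := h𝒩 1 Matrix.PosSemidef.one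
  set P : Matrix (Fin m) (Fin m) ℂ := U * Uᴴ with hPdef
  -- P is the identity on the range of N1
  have hPN1 : P * N1 = N1 := by
    apply mulVec_ext'
    intro x
    have hmem : N1 *ᵥ x ∈ LinearMap.range U.mulVecLin := by
      rw [← hrange]
      exact ⟨x, rfl⟩
    obtain ⟨y, hy⟩ := hmem
    rw [Matrix.mulVecLin_apply] at hy
    rw [← Matrix.mulVec_mulVec, ← hy, Matrix.mulVec_mulVec, hPdef,
      Matrix.mul_assoc, hU, Matrix.mul_one]
  have hN1P : N1 * P = N1 := by
    have := congrArg Matrix.conjTranspose hPN1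
    rwa [Matrix.conjTranspose_mul, hN1.1.eq, hPdef, Matrix.conjTranspose_mul,
      Matrix.conjTranspose_conjTranspose, ← hPdef] at this
  -- the key reduction for bounded PSD arguments
  have key : ∀ (Y : Matrix (Fin n) (Fin n) ℂ), Y.PosSemidef →
      ∀ c : ℝ, (c • (1 : Matrix (Fin n) (Fin n) ℂ) - Y).PosSemidef →
      𝒩 Y = U * (Uᴴ * 𝒩 Y * U) * Uᴴ := by
    intro Y hY c hc
    have hAY : (𝒩 Y).PosSemidef := h𝒩 Y hY
    have hsub : (c • N1 - 𝒩 Y).PosSemidef := by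
      have := h𝒩 _ hc
      rwa [map_sub, _root_.map_smul] at this
    have hker : ∀ x, N1 *ᵥ x = 0 → 𝒩 Y *ᵥ x = 0 := by
      intro x hx
      refine ker_mono' hAY hsub ?_
      rw [Matrix.smul_mulVec, hx, smul_zero]
    have h2 : 𝒩 Y * (1 - P) = 0 := by
      apply mulVec_ext'
      intro x
      rw [Matrix.zero_mulVec, ← Matrix.mulVec_mulVec]
      apply hker
      rw [Matrix.mulVec_mulVec, Matrix.mul_sub, mul_one, hN1P, sub_self,
        Matrix.zero_mulVec]
    have h3 : 𝒩 Y = 𝒩 Y * P := by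
      have := h2
      rw [Matrix.mul_sub, mul_one, sub_eq_zero] at this
      exact this
    have h4 : P * 𝒩 Y = 𝒩 Y := by
      have := congrArg Matrix.conjTranspose h3
      rw [Matrix.conjTranspose_mul, hAY.1.eq, hPdef, Matrix.conjTranspose_mul,
        Matrix.conjTranspose_conjTranspose, ← hPdef] at this
      exact this.symm
    calc 𝒩 Y = P * (𝒩 Y * P) := by rw [← h3, h4]
      _ = U * (Uᴴ * 𝒩 Y * U) * Uᴴ := by
          rw [hPdef]
          simp only [Matrix.mul_assoc]
  constructor
  · -- part (a)
    intro X hX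
    obtain ⟨c, hplus, hminus⟩ := exists_shift_bound hX
    have e1 : 𝒩 (c • (1 : Matrix (Fin n) (Fin n) ℂ) + X) =
        U * (Uᴴ * 𝒩 (c • 1 + X) * U) * Uᴴ := by
      refine key _ hplus (2 * c) ?_
      have : (2 * c) • (1 : Matrix (Fin n) (Fin n) ℂ) - (c • 1 + X) =
          c • (1 : Matrix (Fin n) (Fin n) ℂ) - X := by
        rw [two_mul, add_smul]
        abel
      rwa [this]
    have e2 : N1 = U * (Uᴴ * N1 * U) * Uᴴ := by
      refine key 1 Matrix.PosSemidef.one 1 ?_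
      rw [one_smul, sub_self]
      exact Matrix.PosSemidef.zero
    have hdec : 𝒩 X = 𝒩 (c • (1 : Matrix (Fin n) (Fin n) ℂ) + X) - c • N1 := by
      rw [map_add, _root_.map_smul, hN1def]
      abel
    rw [hdec]
    simp only [Matrix.mul_sub, Matrix.sub_mul, Matrix.mul_smul, Matrix.smul_mul]
    rw [← e1, ← e2]
  · -- part (b)
    intro X hX
    have hA : (𝒩 X).PosSemidef := h𝒩 X hX.posSemidef
    have hpsd : (Uᴴ * 𝒩 X * U).PosSemidef := hA.conjTranspose_mul_mul_same U
    refine Matrix.PosDef.of_dotProduct_mulVec_pos hpsd.1 (fun x hx => ?_)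
    rcases lt_or_eq_of_le (hpsd.dotProduct_mulVec_nonneg x) with h | h
    · exact h
    exfalso
    -- the quadratic form vanishes, derive a contradiction
    have hquad : star (U *ᵥ x) ⬝ᵥ (𝒩 X *ᵥ (U *ᵥ x)) = 0 := by
      rw [Matrix.star_mulVec, ← Matrix.dotProduct_mulVec, Matrix.mulVec_mulVec,
        Matrix.mulVec_mulVec]
      exact h.symm
    have hAUx : 𝒩 X *ᵥ (U *ᵥ x) = 0 :=
      (hA.dotProduct_mulVec_zero_iff (U *ᵥ x)).mp hquad
    obtain ⟨ε, hε, hXε⟩ := posDef_exists_eps hX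
    set w : Fin m → ℂ := U *ᵥ x with hw
    have hsub : (𝒩 X - ε • N1).PosSemidef := by
      have := h𝒩 _ hXε
      rwa [map_sub, _root_.map_smul] at this
    have h1 : (0:ℂ) ≤ -((ε:ℂ) * (star w ⬝ᵥ N1 *ᵥ w)) := by
      have := hsub.dotProduct_mulVec_nonneg w
      rwa [Matrix.sub_mulVec, dotProduct_sub, hAUx, dotProduct_zero,
        zero_sub, Matrix.smul_mulVec, dotProduct_smul,
        Complex.real_smul] at this
    have h2 : (0:ℂ) ≤ (ε:ℂ) * (star w ⬝ᵥ N1 *ᵥ w) :=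
      mul_nonneg (Complex.zero_le_real.mpr hε.le) (hN1.dotProduct_mulVec_nonneg w)
    have h3 : (ε:ℂ) * (star w ⬝ᵥ N1 *ᵥ w) = 0 := le_antisymm (neg_nonneg.mp h1) h2
    have hq : star w ⬝ᵥ N1 *ᵥ w = 0 := by
      rcases mul_eq_zero.mp h3 with h | h
      · exact absurd h (Complex.ofReal_ne_zero.mpr hε.ne')
      · exact h
    have hN1w : N1 *ᵥ w = 0 := (hN1.dotProduct_mulVec_zero_iff w).mp hq
    obtain ⟨y, hy⟩ : ∃ y, N1 *ᵥ y = U *ᵥ x := by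
      have hmem : U.mulVecLin x ∈ LinearMap.range U.mulVecLin := ⟨x, rfl⟩
      rw [← hrange] at hmem
      obtain ⟨y, hy⟩ := hmem
      exact ⟨y, by simpa [Matrix.mulVecLin_apply] using hy⟩
    have hw0 : star w ⬝ᵥ w = 0 := by
      calc star w ⬝ᵥ w = star (N1 *ᵥ y) ⬝ᵥ w := by rw [hw, ← hy]
        _ = star y ⬝ᵥ (N1 *ᵥ w) := by
            rw [Matrix.star_mulVec, ← Matrix.dotProduct_mulVec, hN1.1.eq]
        _ = 0 := by rw [hN1w, dotProduct_zero]
    have hwz : U *ᵥ x = 0 := dotProduct_star_self_eq_zero.mp hw0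
    apply hx
    have h1x : (Uᴴ * U) *ᵥ x = x := by rw [hU, Matrix.one_mulVec]
    rw [← h1x, ← Matrix.mulVec_mulVec, hwz, Matrix.mulVec_zero]


end
end

section
/- Let g : ℝ → ℝ be any function, applied to Hermitian matrices via the functional calculus on eigenvalues, and let A ∈ ℍᵃ₊₊ and B ∈ ℍᵇ₊₊ with spectral decompositions A = Σ_{i=1}^{s} a_i R_i and B = Σ_{j=1}^{u} b_j S_j (a_i, b_j > 0 the distinct eigenvalues, R_i, S_j the orthogonal spectral projections). Then the matrices A ⊗ I_b and I_a ⊗ B commute, and P_g(A ⊗ I_b, I_a ⊗ B) := (A⊗I)^{1/2}·g((A⊗I)^{−1/2}(I⊗B)(A⊗I)^{−1/2})·(A⊗I)^{1/2} satisfies P_g(A ⊗ I_b, I_a ⊗ B) = (A ⊗ I_b)·g(A^{−1} ⊗ B) = Σ_{i=1}^{s} Σ_{j=1}^{u} a_i·g(b_j / a_i)·(R_i ⊗ S_j). -/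
open Matrix Kronecker Filter Topology
open scoped ComplexOrder

noncomputable section

/-- Apply a real function to a Hermitian complex matrix via the functional calculus on
eigenvalues (junk value `0` on non-Hermitian input). -/
def matFun {k : Type*} [Fintype k] [DecidableEq k] (f : ℝ → ℝ)
    (A : Matrix k k ℂ) : Matrix k k ℂ :=
  if hA : A.IsHermitian then
    (hA.eigenvectorUnitary : Matrix k k ℂ) *
      Matrix.diagonal (fun i => (f (hA.eigenvalues i) : ℂ)) *
      star (hA.eigenvectorUnitary : Matrix k k ℂ)
  else 0

/-- Matrix logarithm via the functional calculus, with the convention `log 0 = 0`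
(note `Real.log 0 = 0` in Mathlib). -/
def mlog {k : Type*} [Fintype k] [DecidableEq k] (A : Matrix k k ℂ) : Matrix k k ℂ :=
  matFun Real.log A

/-- Quantum (Umegaki) relative entropy `S(A‖B) = tr[A (log A - log B)]`. -/
def qre {k : Type*} [Fintype k] [DecidableEq k] (A B : Matrix k k ℂ) : ℝ :=
  ((A * (mlog A - mlog B)).trace).re

/-- Quantum (von Neumann) entropy `S(A) = -tr[A log A]`. -/
def qEnt {k : Type*} [Fintype k] [DecidableEq k] (A : Matrix k k ℂ) : ℝ :=
  -((A * mlog A).trace).re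

/-- Partial trace over the first tensor factor. -/
def ptr1 {p q : Type*} [Fintype p] (X : Matrix (p × q) (p × q) ℂ) : Matrix q q ℂ :=
  Matrix.of fun a b => ∑ i, X (i, a) (i, b)

/-- Partial trace over the second tensor factor. -/
def ptr2 {p q : Type*} [Fintype q] (X : Matrix (p × q) (p × q) ℂ) : Matrix p p ℂ :=
  Matrix.of fun i j => ∑ a, X (i, a) (j, a)

/-- Matrix square root of a Hermitian PSD matrix via the functional calculus. -/
def msqrt {k : Type*} [Fintype k] [DecidableEq k] (A : Matrix k k ℂ) : Matrix k k ℂ :=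
  matFun Real.sqrt A

/-- Inverse matrix square root via the functional calculus. -/
def misqrt {k : Type*} [Fintype k] [DecidableEq k] (A : Matrix k k ℂ) : Matrix k k ℂ :=
  matFun (fun x => (Real.sqrt x)⁻¹) A

/-- Noncommutative perspective `P_g(X, Y) = X^{1/2} g(X^{-1/2} Y X^{-1/2}) X^{1/2}`. -/
def Pg {k : Type*} [Fintype k] [DecidableEq k] (g : ℝ → ℝ) (X Y : Matrix k k ℂ) :
    Matrix k k ℂ :=
  msqrt X * matFun g (misqrt X * Y * misqrt X) * msqrt X

/-- The linear functional `Ψ`, characterized by `Ψ[X ⊗ conj(Y)] = tr[X Y]`. -/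
def Psi {k : Type*} [Fintype k] (M : Matrix (k × k) (k × k) ℂ) : ℂ :=
  ∑ i, ∑ j, M (i, i) (j, j)

/-- Entrywise complex conjugate of a matrix. -/
def conjM {a b : Type*} (M : Matrix a b ℂ) : Matrix a b ℂ :=
  M.map (starRingEnd ℂ)

section Aux

variable {k ι : Type*} [Fintype k] [DecidableEq k] [Fintype ι] [DecidableEq ι]

lemma sum_proj_mul (P : ι → Matrix k k ℂ)
    (horth : ∀ i j, P i * P j = if i = j then P i else 0) (γ δ : ι → ℂ) :
    (∑ i, γ i • P i) * (∑ i, δ i • P i) = ∑ i, (γ i * δ i) • P i := by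
  rw [Finset.sum_mul_sum]
  have : ∀ i j, (γ i • P i) * (δ j • P j) = (γ i * δ j) • (P i * P j) := by
    intro i j
    rw [smul_mul_assoc, mul_smul_comm, smul_smul]
  simp_rw [this, horth, smul_ite, smul_zero, Finset.sum_ite_eq, Finset.mem_univ, if_pos]

lemma sum_proj_pow (P : ι → Matrix k k ℂ)
    (horth : ∀ i j, P i * P j = if i = j then P i else 0)
    (hsum : ∑ i, P i = 1) (γ : ι → ℂ) (n : ℕ) :
    (∑ i, γ i • P i) ^ n = ∑ i, (γ i ^ n) • P i := by
  induction n with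
  | zero => simp [hsum]
  | succ n ih =>
      rw [pow_succ, ih, sum_proj_mul P horth]
      exact Finset.sum_congr rfl fun i _ => by rw [← pow_succ]

lemma sum_proj_aeval (P : ι → Matrix k k ℂ)
    (horth : ∀ i j, P i * P j = if i = j then P i else 0)
    (hsum : ∑ i, P i = 1) (γ : ι → ℂ) (p : Polynomial ℂ) :
    Polynomial.aeval (∑ i, γ i • P i) p = ∑ i, (p.eval (γ i)) • P i := by
  induction p using Polynomial.induction_on' with
  | add p q hp hq =>
      simp [map_add, hp, hq, add_smul, Finset.sum_add_distrib]
  | monomial n a =>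
      rw [Polynomial.aeval_monomial, sum_proj_pow P horth hsum]
      rw [Algebra.algebraMap_eq_smul_one, smul_mul_assoc, one_mul, Finset.smul_sum]
      simp_rw [smul_smul, Polynomial.eval_monomial]

lemma uconj_pow (U X : Matrix k k ℂ) (h1 : U * star U = 1) (h2 : star U * U = 1) (n : ℕ) :
    (U * X * star U) ^ n = U * X ^ n * star U := by
  induction n with
  | zero => simp [h1]
  | succ n ih =>
      rw [pow_succ, ih, pow_succ]
      simp only [mul_assoc]
      rw [← mul_assoc (star U) U, h2, one_mul]

lemma aeval_conj_diag (U : Matrix k k ℂ) (h1 : U * star U = 1) (h2 : star U * U = 1)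
    (d : k → ℂ) (p : Polynomial ℂ) :
    Polynomial.aeval (U * Matrix.diagonal d * star U) p =
      U * Matrix.diagonal (fun i => p.eval (d i)) * star U := by
  induction p using Polynomial.induction_on' with
  | add p q hp hq =>
      have : (Matrix.diagonal fun i => (p + q).eval (d i)) =
          Matrix.diagonal (fun i => p.eval (d i)) + Matrix.diagonal (fun i => q.eval (d i)) := by
        ext i j
        by_cases h : i = j <;> simp [Matrix.diagonal_apply, h]
      rw [map_add, hp, hq, this, mul_add, add_mul]
  | monomial n a =>
      rw [Polynomial.aeval_monomial, uconj_pow U _ h1 h2,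
        Algebra.algebraMap_eq_smul_one, smul_mul_assoc, one_mul]
      have : (Matrix.diagonal fun i => (Polynomial.monomial n a).eval (d i)) =
          a • (Matrix.diagonal d) ^ n := by
        rw [Matrix.diagonal_pow]
        ext i j
        by_cases h : i = j <;> simp [Matrix.diagonal_apply, h, Polynomial.eval_monomial]
      rw [this, mul_smul_comm, smul_mul_assoc]

lemma sum_proj_herm (P : ι → Matrix k k ℂ) (hherm : ∀ i, (P i).IsHermitian) (c : ι → ℝ) :
    (∑ i, (c i : ℂ) • P i).IsHermitian := by
  unfold Matrix.IsHermitian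
  rw [Matrix.conjTranspose_sum]
  refine Finset.sum_congr rfl fun i _ => ?_
  rw [Matrix.conjTranspose_smul, hherm i]
  simp

lemma sum_mulVec (P : ι → Matrix k k ℂ) (v : k → ℂ) :
    (∑ i, P i) *ᵥ v = ∑ i, P i *ᵥ v := by
  funext x
  simp only [Matrix.mulVec, dotProduct, Matrix.sum_apply, Finset.sum_apply,
    Finset.sum_mul]
  exact Finset.sum_comm

lemma eig_mem (P : ι → Matrix k k ℂ) (c : ι → ℝ)
    (horth : ∀ i j, P i * P j = if i = j then P i else 0)
    (hsum : ∑ i, P i = 1)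
    (hM : (∑ i, (c i : ℂ) • P i).IsHermitian) (i0 : k) :
    ∃ t : ι, hM.eigenvalues i0 = c t := by
  set M : Matrix k k ℂ := ∑ i, (c i : ℂ) • P i with hMdef
  set v : k → ℂ := ⇑(hM.eigenvectorBasis i0) with hvdef
  have hv : M *ᵥ v = (hM.eigenvalues i0 : ℝ) • v := hM.mulVec_eigenvectorBasis i0
  have hv0 : v ≠ 0 := by
    intro h
    have := hM.eigenvectorBasis.orthonormal.ne_zero i0
    apply this
    ext x
    exact congrFun h x
  have hdecomp : ∑ t, P t *ᵥ v = v := by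
    rw [← _root_.sum_mulVec, hsum, Matrix.one_mulVec]
  have : ∃ t, P t *ᵥ v ≠ 0 := by
    by_contra h
    push_neg at h
    apply hv0
    rw [← hdecomp]
    simp [h]
  obtain ⟨t, ht⟩ := this
  refine ⟨t, ?_⟩
  have hMP : M * P t = (c t : ℂ) • P t := by
    rw [hMdef, Finset.sum_mul]
    simp_rw [smul_mul_assoc, horth, smul_ite, smul_zero]
    rw [Finset.sum_ite_eq', if_pos (Finset.mem_univ t)]
  have hPM : P t * M = (c t : ℂ) • P t := by
    rw [hMdef, Finset.mul_sum]
    simp_rw [mul_smul_comm, horth, smul_ite, smul_zero]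
    rw [Finset.sum_ite_eq, if_pos (Finset.mem_univ t)]
  have key : (c t : ℂ) • (P t *ᵥ v) = ((hM.eigenvalues i0 : ℝ) : ℂ) • (P t *ᵥ v) := by
    have e1 : M *ᵥ (P t *ᵥ v) = (c t : ℂ) • (P t *ᵥ v) := by
      rw [Matrix.mulVec_mulVec, hMP, Matrix.smul_mulVec]
    have e2 : M *ᵥ (P t *ᵥ v) = ((hM.eigenvalues i0 : ℝ) : ℂ) • (P t *ᵥ v) := by
      rw [Matrix.mulVec_mulVec, hMP.trans hPM.symm, ← Matrix.mulVec_mulVec, hv,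
        Matrix.mulVec_smul]
      funext x
      simp [Complex.real_smul]
    rw [← e1, e2]
  obtain ⟨x, hx⟩ := Function.ne_iff.mp ht
  have hx' : (P t *ᵥ v) x ≠ 0 := hx
  have : (c t : ℂ) * (P t *ᵥ v) x = ((hM.eigenvalues i0 : ℝ) : ℂ) * (P t *ᵥ v) x :=
    congrFun key x
  have hc : (c t : ℂ) = ((hM.eigenvalues i0 : ℝ) : ℂ) := mul_right_cancel₀ hx' this
  exact_mod_cast hc.symm

end Aux

section Main

variable {k ι : Type*} [Fintype k] [DecidableEq k] [Fintype ι] [DecidableEq ι]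

lemma matFun_sum_proj (f : ℝ → ℝ) (c : ι → ℝ) (P : ι → Matrix k k ℂ)
    (hherm : ∀ i, (P i).IsHermitian)
    (horth : ∀ i j, P i * P j = if i = j then P i else 0)
    (hsum : ∑ i, P i = 1) :
    matFun f (∑ i, (c i : ℂ) • P i) = ∑ i, ((f (c i) : ℝ) : ℂ) • P i := by
  classical
  have hM : (∑ i, (c i : ℂ) • P i).IsHermitian := sum_proj_herm P hherm c
  rw [matFun, dif_pos hM]
  set M : Matrix k k ℂ := ∑ i, (c i : ℂ) • P i with hMdef
  set U : Matrix k k ℂ := (hM.eigenvectorUnitary : Matrix k k ℂ) with hUdef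
  have h1 : U * star U = 1 := Matrix.mem_unitaryGroup_iff.mp hM.eigenvectorUnitary.2
  have h2 : star U * U = 1 := Matrix.mem_unitaryGroup_iff'.mp hM.eigenvectorUnitary.2
  set sN : Finset ℂ := Finset.univ.image (fun i : ι => (c i : ℂ)) with hsN
  set r : ℂ → ℂ := fun z => if h : ∃ i, (c i : ℂ) = z then ((f (c h.choose) : ℝ) : ℂ) else 0
    with hrdef
  have hr : ∀ i : ι, r ((c i : ℂ)) = ((f (c i) : ℝ) : ℂ) := by
    intro i
    have h : ∃ i', (c i' : ℂ) = (c i : ℂ) := ⟨i, rfl⟩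
    have hch : c h.choose = c i := by exact_mod_cast h.choose_spec
    simp only [hrdef, dif_pos h, hch]
  set p : Polynomial ℂ := Lagrange.interpolate sN id r with hpdef
  have hnode : ∀ z ∈ sN, p.eval z = r z := by
    intro z hz
    have := Lagrange.eval_interpolate_at_node r (Set.injOn_id _) hz
    exact this
  have heig : ∀ i0 : k, ∃ t : ι, hM.eigenvalues i0 = c t :=
    eig_mem P c horth hsum hM
  have hA1 : Polynomial.aeval M p = ∑ i, ((f (c i) : ℝ) : ℂ) • P i := by
    rw [hMdef, sum_proj_aeval P horth hsum]
    refine Finset.sum_congr rfl fun i _ => ?_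
    rw [hnode _ (Finset.mem_image_of_mem _ (Finset.mem_univ i)), hr]
  have hA2 : Polynomial.aeval M p =
      U * Matrix.diagonal (fun i0 => p.eval ((hM.eigenvalues i0 : ℝ) : ℂ)) * star U := by
    conv_lhs => rw [hM.spectral_theorem]
    exact aeval_conj_diag U h1 h2 _ p
  have hdiag : (Matrix.diagonal fun i0 => p.eval ((hM.eigenvalues i0 : ℝ) : ℂ)) =
      Matrix.diagonal fun i0 => ((f (hM.eigenvalues i0) : ℝ) : ℂ) := by
    have hfun : (fun i0 => p.eval ((hM.eigenvalues i0 : ℝ) : ℂ)) =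
        fun i0 => ((f (hM.eigenvalues i0) : ℝ) : ℂ) := by
      funext i0
      obtain ⟨t, ht⟩ := heig i0
      rw [ht, hnode _ (Finset.mem_image_of_mem _ (Finset.mem_univ t)), hr]
    rw [hfun]
  rw [← hA1, hA2, hdiag]

end Main

section Kron

variable {m n s' u' : Type*} [Fintype m] [Fintype n] [Fintype s'] [Fintype u']

lemma sum_smul_kron (γ : s' → ℂ) (δ : u' → ℂ)
    (R : s' → Matrix m m ℂ) (S : u' → Matrix n n ℂ) :
    (∑ i, γ i • R i) ⊗ₖ (∑ j, δ j • S j) =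
      ∑ t : s' × u', (γ t.1 * δ t.2) • (R t.1 ⊗ₖ S t.2) := by
  ext x y
  simp only [Matrix.kroneckerMap_apply, Matrix.sum_apply, Matrix.smul_apply, smul_eq_mul,
    Fintype.sum_prod_type]
  rw [Finset.sum_mul_sum]
  exact Finset.sum_congr rfl fun i _ => Finset.sum_congr rfl fun j _ => by ring

lemma kron_herm {X : Matrix m m ℂ} {Y : Matrix n n ℂ}
    (hX : X.IsHermitian) (hY : Y.IsHermitian) : (X ⊗ₖ Y).IsHermitian := by
  ext x y
  simp only [Matrix.conjTranspose_apply, Matrix.kroneckerMap_apply, star_mul']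
  rw [mul_comm, ← Matrix.conjTranspose_apply X, ← Matrix.conjTranspose_apply Y, hX, hY]
  exact mul_comm _ _

end Kron

set_option maxHeartbeats 1600000 in
/-- For positive definite `A, B` with spectral decompositions
`A = Σᵢ aᵢ Rᵢ`, `B = Σⱼ bⱼ Sⱼ`, the matrices `A ⊗ I` and `I ⊗ B` commute and the
noncommutative perspective satisfies
`P_g(A ⊗ I, I ⊗ B) = (A ⊗ I) g(A⁻¹ ⊗ B) = Σᵢⱼ aᵢ g(bⱼ/aᵢ) (Rᵢ ⊗ Sⱼ)`. -/
theorem perspective_kronecker_spectral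
    (a b s u : ℕ) (g : ℝ → ℝ)
    (A : Matrix (Fin a) (Fin a) ℂ) (B : Matrix (Fin b) (Fin b) ℂ)
    (hA : A.PosDef) (hB : B.PosDef)
    (av : Fin s → ℝ) (R : Fin s → Matrix (Fin a) (Fin a) ℂ)
    (bv : Fin u → ℝ) (S : Fin u → Matrix (Fin b) (Fin b) ℂ)
    (hav : ∀ i, 0 < av i) (havinj : Function.Injective av)
    (hbv : ∀ j, 0 < bv j) (hbvinj : Function.Injective bv)
    (hRherm : ∀ i, (R i).IsHermitian)
    (hSherm : ∀ j, (S j).IsHermitian)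
    (hRproj : ∀ i j, R i * R j = if i = j then R i else 0)
    (hSproj : ∀ i j, S i * S j = if i = j then S i else 0)
    (hRsum : ∑ i, R i = 1)
    (hSsum : ∑ j, S j = 1)
    (hAeq : A = ∑ i, (av i : ℂ) • R i)
    (hBeq : B = ∑ j, (bv j : ℂ) • S j) :
    (A ⊗ₖ (1 : Matrix (Fin b) (Fin b) ℂ)) * ((1 : Matrix (Fin a) (Fin a) ℂ) ⊗ₖ B) =
      ((1 : Matrix (Fin a) (Fin a) ℂ) ⊗ₖ B) * (A ⊗ₖ (1 : Matrix (Fin b) (Fin b) ℂ)) ∧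
    Pg g (A ⊗ₖ (1 : Matrix (Fin b) (Fin b) ℂ)) ((1 : Matrix (Fin a) (Fin a) ℂ) ⊗ₖ B) =
      (A ⊗ₖ (1 : Matrix (Fin b) (Fin b) ℂ)) * matFun g (A⁻¹ ⊗ₖ B) ∧
    Pg g (A ⊗ₖ (1 : Matrix (Fin b) (Fin b) ℂ)) ((1 : Matrix (Fin a) (Fin a) ℂ) ⊗ₖ B) =
      ∑ i, ∑ j, ((av i * g (bv j / av i) : ℝ) : ℂ) • (R i ⊗ₖ S j) := by
  classical
  set P : Fin s × Fin u → Matrix (Fin a × Fin b) (Fin a × Fin b) ℂ :=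
    fun t => R t.1 ⊗ₖ S t.2 with hPdef
  have hPherm : ∀ t, (P t).IsHermitian := fun t => kron_herm (hRherm t.1) (hSherm t.2)
  have hPorth : ∀ t t', P t * P t' = if t = t' then P t else 0 := by
    intro t t'
    show (R t.1 ⊗ₖ S t.2) * (R t'.1 ⊗ₖ S t'.2) = _
    rw [← Matrix.mul_kronecker_mul, hRproj, hSproj]
    by_cases h1 : t.1 = t'.1 <;> by_cases h2 : t.2 = t'.2 <;>
      simp [Prod.ext_iff, h1, h2, hPdef]
  have hPsum : ∑ t, P t = 1 := by
    have h := sum_smul_kron (fun _ : Fin s => (1 : ℂ)) (fun _ : Fin u => (1 : ℂ)) R S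
    simp only [one_smul, one_mul] at h
    rw [hPdef, ← h, hRsum, hSsum, Matrix.one_kronecker_one]
  have hone_b : (1 : Matrix (Fin b) (Fin b) ℂ) = ∑ j, (1 : ℂ) • S j := by simp [hSsum]
  have hone_a : (1 : Matrix (Fin a) (Fin a) ℂ) = ∑ i, (1 : ℂ) • R i := by simp [hRsum]
  have hX : A ⊗ₖ (1 : Matrix (Fin b) (Fin b) ℂ) = ∑ t, ((av t.1 : ℝ) : ℂ) • P t := by
    rw [hAeq, hone_b, sum_smul_kron]
    simp [hPdef]
  have hY : (1 : Matrix (Fin a) (Fin a) ℂ) ⊗ₖ B = ∑ t, ((bv t.2 : ℝ) : ℂ) • P t := by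
    rw [hBeq, hone_a, sum_smul_kron]
    simp [hPdef]
  have hsq : ∀ i, Real.sqrt (av i) * Real.sqrt (av i) = av i :=
    fun i => Real.mul_self_sqrt (hav i).le
  have hsqne : ∀ i, Real.sqrt (av i) ≠ 0 := fun i => ne_of_gt (Real.sqrt_pos.mpr (hav i))
  have hmsqrt : msqrt (A ⊗ₖ (1 : Matrix (Fin b) (Fin b) ℂ)) =
      ∑ t, ((Real.sqrt (av t.1) : ℝ) : ℂ) • P t := by
    rw [msqrt, hX, matFun_sum_proj Real.sqrt (fun t => av t.1) P hPherm hPorth hPsum]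
  have hmisqrt : misqrt (A ⊗ₖ (1 : Matrix (Fin b) (Fin b) ℂ)) =
      ∑ t, (((Real.sqrt (av t.1))⁻¹ : ℝ) : ℂ) • P t := by
    rw [misqrt, hX,
      matFun_sum_proj (fun x => (Real.sqrt x)⁻¹) (fun t => av t.1) P hPherm hPorth hPsum]
  have hmid : misqrt (A ⊗ₖ (1 : Matrix (Fin b) (Fin b) ℂ)) *
      ((1 : Matrix (Fin a) (Fin a) ℂ) ⊗ₖ B) *
      misqrt (A ⊗ₖ (1 : Matrix (Fin b) (Fin b) ℂ)) =
      ∑ t, ((bv t.2 / av t.1 : ℝ) : ℂ) • P t := by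
    rw [hmisqrt, hY, sum_proj_mul P hPorth, sum_proj_mul P hPorth]
    refine Finset.sum_congr rfl fun t _ => ?_
    congr 1
    have hreal : (Real.sqrt (av t.1))⁻¹ * bv t.2 * (Real.sqrt (av t.1))⁻¹ =
        bv t.2 / av t.1 := by
      rw [mul_comm ((Real.sqrt (av t.1))⁻¹) (bv t.2), mul_assoc, ← mul_inv, hsq,
        div_eq_mul_inv]
    exact_mod_cast hreal
  have hPg : Pg g (A ⊗ₖ (1 : Matrix (Fin b) (Fin b) ℂ)) ((1 : Matrix (Fin a) (Fin a) ℂ) ⊗ₖ B) =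
      ∑ t, ((av t.1 * g (bv t.2 / av t.1) : ℝ) : ℂ) • P t := by
    rw [Pg, hmid, matFun_sum_proj g (fun t => bv t.2 / av t.1) P hPherm hPorth hPsum,
      hmsqrt, sum_proj_mul P hPorth, sum_proj_mul P hPorth]
    refine Finset.sum_congr rfl fun t _ => ?_
    congr 1
    have hreal : Real.sqrt (av t.1) * g (bv t.2 / av t.1) * Real.sqrt (av t.1) =
        av t.1 * g (bv t.2 / av t.1) := by
      rw [mul_comm (Real.sqrt (av t.1)) (g (bv t.2 / av t.1)), mul_assoc, hsq, mul_comm]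
    exact_mod_cast hreal
  refine ⟨?_, ?_, ?_⟩
  · rw [hX, hY, sum_proj_mul P hPorth, sum_proj_mul P hPorth]
    exact Finset.sum_congr rfl fun t _ => by rw [mul_comm]
  · have hAinv : A⁻¹ = ∑ i, (((av i)⁻¹ : ℝ) : ℂ) • R i := by
      apply Matrix.inv_eq_right_inv
      rw [hAeq, sum_proj_mul R hRproj]
      calc ∑ i, ((av i : ℂ) * (((av i)⁻¹ : ℝ) : ℂ)) • R i = ∑ i, (1 : ℂ) • R i := by
            refine Finset.sum_congr rfl fun i _ => ?_
            congr 1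
            have : av i * (av i)⁻¹ = 1 := mul_inv_cancel₀ (ne_of_gt (hav i))
            exact_mod_cast this
        _ = 1 := by simp [hRsum]
    have hAinvB : A⁻¹ ⊗ₖ B = ∑ t, ((bv t.2 / av t.1 : ℝ) : ℂ) • P t := by
      rw [hAinv, hBeq, sum_smul_kron]
      refine Finset.sum_congr rfl fun t _ => ?_
      congr 1
      have : ((av t.1)⁻¹ : ℝ) * bv t.2 = bv t.2 / av t.1 := inv_mul_eq_div _ _
      exact_mod_cast this
    rw [hPg, hAinvB, matFun_sum_proj g (fun t => bv t.2 / av t.1) P hPherm hPorth hPsum,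
      hX, sum_proj_mul P hPorth]
    refine Finset.sum_congr rfl fun t _ => ?_
    congr 1
    push_cast
    ring
  · rw [hPg, Fintype.sum_prod_type]
end
end

section
/- Let A ∈ ℝ^{n×n} and B ∈ ℝ^{r×r} be symmetric matrices and U ∈ ℝ^{n×r}. If B is positive definite and A − U B Uᵀ is positive definite, then A is positive definite and B⁻¹ − Uᵀ A⁻¹ U is positive definite. -/
open Matrix

/-- If `B ≻ 0` and `A - U B Uᵀ ≻ 0` then `A ≻ 0` and
`B⁻¹ - Uᵀ A⁻¹ U ≻ 0`. -/
theorem schur_complement_posDef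
    (n r : ℕ) (A : Matrix (Fin n) (Fin n) ℝ) (B : Matrix (Fin r) (Fin r) ℝ)
    (U : Matrix (Fin n) (Fin r) ℝ) (hA : A.IsSymm) (hB : B.IsSymm)
    (hBpd : B.PosDef) (hpd : (A - U * B * Uᵀ).PosDef) :
    A.PosDef ∧ (B⁻¹ - Uᵀ * A⁻¹ * U).PosDef := by
  have hUt : Uᴴ = Uᵀ := by
    ext i j; simp [conjTranspose_apply]
  have hUBU : (U * B * Uᵀ).PosSemidef := by
    have := hBpd.posSemidef.mul_mul_conjTranspose_same U
    rwa [hUt] at this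
  have hApd : A.PosDef := by
    have := hpd.add_posSemidef hUBU
    rwa [sub_add_cancel] at this
  refine ⟨hApd, ?_⟩
  haveI : Invertible A := hApd.isUnit.invertible
  haveI : Invertible B := hBpd.isUnit.invertible
  haveI : Invertible (B⁻¹) := hBpd.inv.isUnit.invertible
  have hBinv : (B⁻¹).PosDef := hBpd.inv
  have hBB : (B⁻¹)⁻¹ = B := by
    rw [Matrix.nonsing_inv_nonsing_inv _ (isUnit_iff_isUnit_det _ |>.1 hBpd.isUnit)]
  -- The block matrix M = [A U; Uᵀ B⁻¹] is positive definite.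
  have hMpd : (fromBlocks A U Uᵀ (B⁻¹)).PosDef := by
    refine posDef_iff_dotProduct_mulVec.mpr ⟨?_, ?_⟩
    · rw [← hUt, IsHermitian.fromBlocks₂₂ A U hBinv.1, hBB, hUt]
      exact hpd.1
    · intro v hv
      have hvdec : v = (v ∘ Sum.inl) ⊕ᵥ (v ∘ Sum.inr) := by
        funext i; cases i <;> rfl
      set x := v ∘ Sum.inl with hx
      set y := v ∘ Sum.inr with hy
      have key := schur_complement_eq₂₂ A U x y (hBinv.1) (D := B⁻¹)
      rw [dotProduct_mulVec, hvdec]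
      rw [hUt] at key
      rw [key, hBB]
      have h1 : 0 ≤ star ((B * Uᵀ) *ᵥ x + y) ᵥ* B⁻¹ ⬝ᵥ ((B * Uᵀ) *ᵥ x + y) := by
        rw [← dotProduct_mulVec]
        exact hBinv.posSemidef.dotProduct_mulVec_nonneg _
      have h2 : 0 ≤ star x ᵥ* (A - U * B * Uᵀ) ⬝ᵥ x := by
        rw [← dotProduct_mulVec]
        exact hpd.posSemidef.dotProduct_mulVec_nonneg _
      rcases eq_or_ne x 0 with hx0 | hx0
      · have hy0 : y ≠ 0 := by
          intro hy0
          apply hv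
          rw [hvdec, hx0, hy0]
          funext i; cases i <;> rfl
        have : 0 < star ((B * Uᵀ) *ᵥ x + y) ᵥ* B⁻¹ ⬝ᵥ ((B * Uᵀ) *ᵥ x + y) := by
          rw [← dotProduct_mulVec]
          apply hBinv.dotProduct_mulVec_pos
          rw [hx0, mulVec_zero, zero_add]
          exact hy0
        have h2' := h2
        positivity
      · have : 0 < star x ᵥ* (A - U * B * Uᵀ) ⬝ᵥ x := by
          rw [← dotProduct_mulVec]
          exact hpd.dotProduct_mulVec_pos hx0
        positivity
  -- Now use the Schur complement identity for the ₁₁ block.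
  refine posDef_iff_dotProduct_mulVec.mpr ⟨?_, ?_⟩
  · have h1 : (Uᴴ * A⁻¹ * U).IsHermitian :=
      isHermitian_conjTranspose_mul_mul U hApd.1.inv
    rw [← hUt]
    exact hBinv.1.sub h1
  · intro y hy
    have key := schur_complement_eq₁₁ U (B⁻¹) (-((A⁻¹ * U) *ᵥ y)) y hApd.1
    rw [neg_add_cancel] at key
    have hz : star (0 : Fin n → ℝ) ᵥ* A ⬝ᵥ (0 : Fin n → ℝ) = 0 := by
      simp
    rw [hz, zero_add, hUt] at key
    rw [dotProduct_mulVec, ← key]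
    have hv : (-((A⁻¹ * U) *ᵥ y)) ⊕ᵥ y ≠ 0 := by
      intro h
      apply hy
      funext i
      have := congrFun h (Sum.inr i)
      simpa using this
    have := hMpd.dotProduct_mulVec_pos hv
    rwa [dotProduct_mulVec] at this
end
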